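/- For every x ∈ ℝⁿ with γ(x) ≥ 0, the matrix V(x)·Q(x)·A is symmetric and positive semidefinite; explicitly, for every v = (v₁, v₂, v₃, …, v_{n+2}) ∈ ℝ^{n+2}, one has ⟨v, V(x)Q(x)A v⟩ = 2γ(x)(3v₁ − v₂)² + 2(v₃² + ⋯ + v_{n+2}²) ≥ 0. -/
import Mathlib


open scoped BigOperators
open Matrix

/-- Partial derivative of `f` with respect to the `i`-th coordinate at `x`. -/
noncomputable def pxi {n : ℕ} (i : Fin n) (f : (Fin n → ℝ) → ℝ) (x : Fin n → ℝ) : ℝ :=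
  deriv (fun s => f (Function.update x i s)) (x i)

/-- `γ(x) = 1 − |∇ψ(x)|²`. -/
noncomputable def gam {n : ℕ} (ψ : (Fin n → ℝ) → ℝ) (x : Fin n → ℝ) : ℝ :=
  1 - ∑ i, (pxi i ψ x) ^ 2

/-- `Q(x) = diag(1, γ(x), 1, …, 1)`. -/
noncomputable def Qmat {n : ℕ} (ψ : (Fin n → ℝ) → ℝ) (x : Fin n → ℝ) :
    Matrix (Fin (n + 2)) (Fin (n + 2)) ℝ :=
  Matrix.diagonal fun i => if i = 1 then gam ψ x else 1

/-- `V(x) = diag(6γ(x), 1, …, 1)`. -/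
noncomputable def Vmat {n : ℕ} (ψ : (Fin n → ℝ) → ℝ) (x : Fin n → ℝ) :
    Matrix (Fin (n + 2)) (Fin (n + 2)) ℝ :=
  Matrix.diagonal fun i => if i = 0 then 6 * gam ψ x else 1

/-- The `(n+2)×(n+2)` matrix with upper-left `2×2` block `[[3,-1],[-6,2]]`,
lower-right `n×n` block `2·Iₙ`, and zeros elsewhere. -/
noncomputable def Amat (n : ℕ) : Matrix (Fin (n + 2)) (Fin (n + 2)) ℝ :=
  Matrix.of fun i j =>
    if i = 0 then (if j = 0 then 3 else if j = 1 then -1 else 0)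
    else if i = 1 then (if j = 0 then -6 else if j = 1 then 2 else 0)
    else if j = i then 2 else 0

lemma VQA_apply {n : ℕ} (ψ : (Fin n → ℝ) → ℝ) (x : Fin n → ℝ) (i j : Fin (n+2)) :
    (Vmat ψ x * Qmat ψ x * Amat n) i j =
      if i = 0 then (if j = 0 then 18 * gam ψ x else if j = 1 then -6 * gam ψ x else 0)
      else if i = 1 then (if j = 0 then -6 * gam ψ x else if j = 1 then 2 * gam ψ x else 0)
      else if j = i then 2 else 0 := by
  have h : Vmat ψ x * Qmat ψ x =
      Matrix.diagonal (fun i : Fin (n+2) =>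
        (if i = 0 then 6 * gam ψ x else 1) * (if i = 1 then gam ψ x else 1)) := by
    simp [Vmat, Qmat, Matrix.diagonal_mul_diagonal]
  rw [h, Matrix.diagonal_mul]
  by_cases hi0 : i = 0
  · subst hi0
    simp [Amat]
    by_cases hj0 : j = 0
    · simp [hj0]; ring
    · by_cases hj1 : j = 1 <;> simp [hj0, hj1] <;> ring
  · by_cases hi1 : i = 1
    · subst hi1
      simp [Amat]
      by_cases hj0 : j = 0
      · simp [hj0]; ring
      · by_cases hj1 : j = 1 <;> simp [hj0, hj1] <;> ring
    · simp [Amat, hi0, hi1]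

/-- For `γ(x) ≥ 0`, the matrix `V(x)Q(x)A` is symmetric and positive semidefinite, with
quadratic form `⟨v, VQA v⟩ = 2γ(x)(3v₁ − v₂)² + 2(v₃² + ⋯ + v_{n+2}²) ≥ 0`. -/
theorem VQA_symm_posSemidef (n : ℕ) (hn : 1 ≤ n)
    (ψ : (Fin n → ℝ) → ℝ) (hψ : ContDiff ℝ 1 ψ)
    (x : Fin n → ℝ) (hγ : 0 ≤ gam ψ x) :
    (Vmat ψ x * Qmat ψ x * Amat n).IsSymm ∧
    (∀ v : Fin (n + 2) → ℝ,
      v ⬝ᵥ (Vmat ψ x * Qmat ψ x * Amat n).mulVec v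
        = 2 * gam ψ x * (3 * v 0 - v 1) ^ 2
          + 2 * ∑ i : Fin n, (v i.succ.succ) ^ 2) ∧
    (∀ v : Fin (n + 2) → ℝ,
      0 ≤ v ⬝ᵥ (Vmat ψ x * Qmat ψ x * Amat n).mulVec v) := by
  have key : ∀ v : Fin (n + 2) → ℝ,
      v ⬝ᵥ (Vmat ψ x * Qmat ψ x * Amat n).mulVec v
        = 2 * gam ψ x * (3 * v 0 - v 1) ^ 2
          + 2 * ∑ i : Fin n, (v i.succ.succ) ^ 2 := by
    intro v
    have hmv : ∀ i, (Vmat ψ x * Qmat ψ x * Amat n).mulVec v i =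
        (if i = 0 then 18 * gam ψ x * v 0 - 6 * gam ψ x * v 1
         else if i = 1 then -6 * gam ψ x * v 0 + 2 * gam ψ x * v 1
         else 2 * v i) := by
      intro i
      rw [Matrix.mulVec]
      simp only [dotProduct, VQA_apply]
      by_cases hi0 : i = 0
      · subst hi0
        rw [Fin.sum_univ_succ, Fin.sum_univ_succ]
        simp [Fin.succ_ne_zero, Fin.succ_succ_ne_one]
        ring
      · by_cases hi1 : i = 1
        · subst hi1
          rw [Fin.sum_univ_succ, Fin.sum_univ_succ]
          simp [Fin.succ_ne_zero, Fin.succ_succ_ne_one, hi0]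
        · simp only [hi0, hi1, if_false]
          obtain ⟨k, rfl⟩ : ∃ k : Fin n, i = k.succ.succ := by
            obtain ⟨m, hm⟩ := i
            match m, hm with
            | 0, _ => exact absurd rfl hi0
            | 1, _ => exact absurd rfl hi1
            | (m+2), hm => exact ⟨⟨m, by omega⟩, rfl⟩
          rw [Fin.sum_univ_succ, Fin.sum_univ_succ]
          simp [Fin.succ_inj, (Fin.succ_ne_zero _).symm,
            (Fin.succ_succ_ne_one k).symm, ite_mul, Finset.sum_ite_eq]
    rw [dotProduct]
    rw [Fin.sum_univ_succ, Fin.sum_univ_succ]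
    simp only [hmv, Fin.succ_ne_zero, Fin.succ_succ_ne_one, Fin.succ_zero_eq_one,
      if_false, if_true, ite_true, ite_false, one_ne_zero, reduceIte]
    rw [Finset.mul_sum]
    rw [show (∑ i : Fin n, v i.succ.succ * (2 * v i.succ.succ))
        = ∑ i : Fin n, 2 * v i.succ.succ ^ 2 from Finset.sum_congr rfl (by intros; ring)]
    ring
  refine ⟨?_, key, fun v => ?_⟩
  · rw [Matrix.IsSymm]
    ext i j
    rw [Matrix.transpose_apply, VQA_apply, VQA_apply]
    by_cases hi0 : i = 0 <;> by_cases hj0 : j = 0 <;>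
      by_cases hi1 : i = 1 <;> by_cases hj1 : j = 1 <;>
      simp_all [eq_comm]
  · rw [key v]
    have h1 : 0 ≤ 2 * gam ψ x * (3 * v 0 - v 1) ^ 2 := by positivity
    have h2 : 0 ≤ 2 * ∑ i : Fin n, (v i.succ.succ) ^ 2 := by positivity
    linarith
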